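/- arXiv:1107.0175 — 4 statements merged into one kernel-verified Lean document; each statement's English description precedes it below -/
import Mathlib

section
/- Let d ≥ 2 be an even integer and let S_d = {χ ∈ {0,1}^d : χ_{2j-1} + χ_{2j} = 1 for each j = 1, …, d/2}. Then for all finitely supported functions a, b : ℕ^d → ℂ, |∑_{α, β ∈ ℕ^d, α+β ∈ S_d} a(α) b(β)| ≤ 2^{d/4} · ‖a‖_{ℓ²} ‖b‖_{ℓ²}. -/
/-!
Weighted Schur test. Call the coordinate pair `j` a zero pair of `α` if `α` vanishes on it, and let
`z(α)` be the number of zero pairs. If `α + β ∈ S_d`, the zero pairs of `β` are exactly the other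
pairs of `α`, so `z(α) + z(β) = d / 2`; moreover `β` vanishes off the zero pairs of `α` and is
`(1, 0)` or `(0, 1)` on each of them, so for fixed `α` there are at most `2 ^ z(α)` such `β`.
With the test function `w(γ) = 2 ^ (z(γ) / 2)` every row (and, by symmetry, column) sum of the
kernel satisfies `∑_β w(β) ≤ 2 ^ z(α) * 2 ^ ((d / 2 - z(α)) / 2) = 2 ^ (d / 4) * w(α)`.
-/

open MeasureTheory Real

/-- The `ℓ²` norm `(∑_α |a(α)|²)^{1/2}` of a finitely supported `a : ℕ^d → ℂ`. -/
noncomputable def l2norm {d : ℕ} (a : (Fin d → ℕ) →₀ ℂ) : ℝ :=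
  Real.sqrt (∑ α ∈ a.support, ‖a α‖ ^ 2)

/-- The set `S_d = {χ ∈ {0,1}^d : χ_{2j-1} + χ_{2j} = 1 for each j = 1, …, d/2}`
of multi-indices (written with 0-based indexing: the pairs are `(2j, 2j+1)` for
`j = 0, …, d/2 - 1`). -/
def Sd (d : ℕ) : Set (Fin d → ℕ) :=
  {χ | (∀ k, χ k ≤ 1) ∧
    ∀ j : Fin (d / 2),
      χ ⟨2 * (j : ℕ), by have := j.isLt; omega⟩ +
      χ ⟨2 * (j : ℕ) + 1, by have := j.isLt; omega⟩ = 1}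

open Finset

section SchurTest

variable {ι κ : Type*} {s : Finset ι} {t : Finset κ} {K : ι → κ → ℝ} {p : ι → ℝ} {q : κ → ℝ}
  {C : ℝ}

theorem sum_sum_mul_div_mul_sq_le (hp : ∀ i ∈ s, 0 < p i)
    (hrow : ∀ i ∈ s, ∑ j ∈ t, K i j * q j ≤ C * p i) (x : ι → ℝ) :
    ∑ i ∈ s, ∑ j ∈ t, K i j * (q j / p i) * x i ^ 2 ≤ C * ∑ i ∈ s, x i ^ 2 := by
  rw [mul_sum]
  refine sum_le_sum fun i hi => ?_
  calc ∑ j ∈ t, K i j * (q j / p i) * x i ^ 2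
      = (∑ j ∈ t, K i j * q j) / p i * x i ^ 2 := by
        rw [sum_div, sum_mul]
        exact sum_congr rfl fun j _ => by ring
    _ ≤ C * p i / p i * x i ^ 2 := by gcongr; exacts [(hp i hi).le, hrow i hi]
    _ = C * x i ^ 2 := by rw [mul_div_cancel_right₀ _ (hp i hi).ne']

/-- `√(K q / p) x` and `√(K p / q) y` multiply to `K x y`; apply Cauchy–Schwarz to them. -/
theorem sum_sum_mul_le_of_schur (hK : ∀ i j, 0 ≤ K i j) (hp : ∀ i ∈ s, 0 < p i)
    (hq : ∀ j ∈ t, 0 < q j) (hC : 0 ≤ C) (hrow : ∀ i ∈ s, ∑ j ∈ t, K i j * q j ≤ C * p i)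
    (hcol : ∀ j ∈ t, ∑ i ∈ s, K i j * p i ≤ C * q j) (x : ι → ℝ) (y : κ → ℝ) :
    ∑ i ∈ s, ∑ j ∈ t, K i j * x i * y j ≤ C * √(∑ i ∈ s, x i ^ 2) * √(∑ j ∈ t, y j ^ 2) := by
  set f : ι × κ → ℝ := fun ij => √(K ij.1 ij.2 * (q ij.2 / p ij.1)) * x ij.1
  set g : ι × κ → ℝ := fun ij => √(K ij.1 ij.2 * (p ij.1 / q ij.2)) * y ij.2
  have hfg : ∀ ij ∈ s ×ˢ t, K ij.1 ij.2 * x ij.1 * y ij.2 = f ij * g ij := by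
    rintro ⟨i, j⟩ hij
    obtain ⟨hi, hj⟩ := mem_product.mp hij
    have hK' : √(K i j * (q j / p i)) * √(K i j * (p i / q j)) = K i j := by
      have hqp : q j / p i * (p i / q j) = 1 := by
        field_simp [(hq j hj).ne', (hp i hi).ne']
      rw [← Real.sqrt_mul (mul_nonneg (hK i j) (div_pos (hq j hj) (hp i hi)).le),
        mul_mul_mul_comm, hqp, mul_one, Real.sqrt_mul_self (hK i j)]
    simp only [f, g]
    rw [mul_mul_mul_comm, hK', mul_assoc]
  have hf : ∑ ij ∈ s ×ˢ t, f ij ^ 2 ≤ C * ∑ i ∈ s, x i ^ 2 := by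
    refine le_of_eq_of_le ?_ (sum_sum_mul_div_mul_sq_le hp hrow x)
    rw [sum_product]
    refine sum_congr rfl fun i hi => sum_congr rfl fun j hj => ?_
    rw [mul_pow, Real.sq_sqrt (mul_nonneg (hK i j) (div_pos (hq j hj) (hp i hi)).le)]
  have hg : ∑ ij ∈ s ×ˢ t, g ij ^ 2 ≤ C * ∑ j ∈ t, y j ^ 2 := by
    refine le_of_eq_of_le ?_ (sum_sum_mul_div_mul_sq_le (K := fun j i => K i j) hq hcol y)
    rw [sum_product_right]
    refine sum_congr rfl fun j hj => sum_congr rfl fun i hi => ?_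
    rw [mul_pow, Real.sq_sqrt (mul_nonneg (hK i j) (div_pos (hp i hi) (hq j hj)).le)]
  calc ∑ i ∈ s, ∑ j ∈ t, K i j * x i * y j
      = ∑ ij ∈ s ×ˢ t, f ij * g ij := by rw [← sum_congr rfl hfg, sum_product]
    _ ≤ √(∑ ij ∈ s ×ˢ t, f ij ^ 2) * √(∑ ij ∈ s ×ˢ t, g ij ^ 2) :=
        Real.sum_mul_le_sqrt_mul_sqrt _ _ _
    _ ≤ √(C * ∑ i ∈ s, x i ^ 2) * √(C * ∑ j ∈ t, y j ^ 2) := by gcongr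
    _ = C * √(∑ i ∈ s, x i ^ 2) * √(∑ j ∈ t, y j ^ 2) := by
        rw [Real.sqrt_mul hC, Real.sqrt_mul hC, mul_mul_mul_comm, Real.mul_self_sqrt hC, mul_assoc]

end SchurTest

section ZeroPairs

variable {d : ℕ}

def pairFst (j : Fin (d / 2)) : Fin d := ⟨2 * (j : ℕ), by have := j.isLt; omega⟩

def pairSnd (j : Fin (d / 2)) : Fin d := ⟨2 * (j : ℕ) + 1, by have := j.isLt; omega⟩

theorem exists_eq_pairFst_or_eq_pairSnd (hd : Even d) (k : Fin d) :
    ∃ j : Fin (d / 2), k = pairFst j ∨ k = pairSnd j := by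
  obtain ⟨m, rfl⟩ := hd
  refine ⟨⟨k / 2, by omega⟩, ?_⟩
  simp only [pairFst, pairSnd, Fin.ext_iff]
  omega

theorem le_one_of_mem_Sd {χ : Fin d → ℕ} (h : χ ∈ Sd d) (k : Fin d) : χ k ≤ 1 := h.1 k

theorem pair_add_eq_one_of_mem_Sd {χ : Fin d → ℕ} (h : χ ∈ Sd d) (j : Fin (d / 2)) :
    χ (pairFst j) + χ (pairSnd j) = 1 := h.2 j

def zeroPairs (α : Fin d → ℕ) : Finset (Fin (d / 2)) :=
  univ.filter fun j => α (pairFst j) = 0 ∧ α (pairSnd j) = 0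

theorem zeroPairs_eq_compl_of_add_mem_Sd {α β : Fin d → ℕ} (h : α + β ∈ Sd d) :
    zeroPairs β = (zeroPairs α)ᶜ := by
  ext j
  have hj := pair_add_eq_one_of_mem_Sd h j
  simp only [Pi.add_apply] at hj
  simp only [zeroPairs, mem_compl, mem_filter, mem_univ, true_and]
  omega

theorem card_zeroPairs_add_card_zeroPairs {α β : Fin d → ℕ} (h : α + β ∈ Sd d) :
    #(zeroPairs α) + #(zeroPairs β) = d / 2 := by
  rw [zeroPairs_eq_compl_of_add_mem_Sd h, card_add_card_compl, Fintype.card_fin]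

theorem eq_of_add_mem_Sd (hd : Even d) {γ δ₁ δ₂ : Fin d → ℕ} (h₁ : γ + δ₁ ∈ Sd d)
    (h₂ : γ + δ₂ ∈ Sd d) (h : ∀ j ∈ zeroPairs γ, δ₁ (pairFst j) = δ₂ (pairFst j)) :
    δ₁ = δ₂ := by
  funext k
  obtain ⟨j, hk⟩ := exists_eq_pairFst_or_eq_pairSnd hd k
  have e₁ := pair_add_eq_one_of_mem_Sd h₁ j
  have e₂ := pair_add_eq_one_of_mem_Sd h₂ j
  simp only [Pi.add_apply] at e₁ e₂
  by_cases hj : j ∈ zeroPairs γ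
  · have hfst := h j hj
    simp only [zeroPairs, mem_filter, mem_univ, true_and] at hj
    rcases hk with rfl | rfl <;> omega
  · simp only [zeroPairs, mem_filter, mem_univ, true_and] at hj
    rcases hk with rfl | rfl <;> omega

open scoped Classical in
theorem card_filter_add_mem_Sd_le (hd : Even d) (γ : Fin d → ℕ) (B : Finset (Fin d → ℕ)) :
    #(B.filter fun δ => γ + δ ∈ Sd d) ≤ 2 ^ #(zeroPairs γ) := by
  rw [← card_powerset]
  refine card_le_card_of_injOn (fun δ => (zeroPairs γ).filter fun j => δ (pairFst j) = 0)
    (fun δ _ => mem_powerset.mpr (filter_subset _ _)) ?_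
  intro δ₁ hδ₁ δ₂ hδ₂ hδ
  have h₁ := (mem_filter.mp hδ₁).2
  have h₂ := (mem_filter.mp hδ₂).2
  refine eq_of_add_mem_Sd hd h₁ h₂ fun j hj => ?_
  have hiff := filter_inj'.mp hδ hj
  have b₁ := le_one_of_mem_Sd h₁ (pairFst j)
  have b₂ := le_one_of_mem_Sd h₂ (pairFst j)
  simp only [Pi.add_apply] at b₁ b₂
  omega

end ZeroPairs

theorem norm_sum_sum_mul_mul_le {ι κ R : Type*} [SeminormedRing R] (s : Finset ι)
    (t : Finset κ) (K : ι → κ → R) (x : ι → R) (y : κ → R) :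
    ‖∑ i ∈ s, ∑ j ∈ t, K i j * x i * y j‖ ≤ ∑ i ∈ s, ∑ j ∈ t, ‖K i j‖ * ‖x i‖ * ‖y j‖ :=
  (norm_sum_le _ _).trans <| sum_le_sum fun _ _ => (norm_sum_le _ _).trans <|
    sum_le_sum fun _ _ => (norm_mul_le _ _).trans <|
      mul_le_mul_of_nonneg_right (norm_mul_le _ _) (norm_nonneg _)

section ZeroPairWeight

variable {d : ℕ}

noncomputable def zeroPairWeight (γ : Fin d → ℕ) : ℝ := 2 ^ ((#(zeroPairs γ) : ℝ) / 2)

theorem zeroPairWeight_pos (γ : Fin d → ℕ) : 0 < zeroPairWeight γ := by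
  unfold zeroPairWeight; positivity

open scoped Classical in
theorem sum_ite_add_mem_Sd_mul_zeroPairWeight_le (hd : Even d) (α : Fin d → ℕ)
    (B : Finset (Fin d → ℕ)) :
    ∑ β ∈ B, (if α + β ∈ Sd d then (1 : ℝ) else 0) * zeroPairWeight β
      ≤ 2 ^ ((d : ℝ) / 4) * zeroPairWeight α := by
  have hweight : ∀ β ∈ B.filter (fun β => α + β ∈ Sd d),
      zeroPairWeight β = 2 ^ (((d : ℝ) / 2 - #(zeroPairs α)) / 2) := by
    intro β hβ
    have hcard : (#(zeroPairs α) + #(zeroPairs β) : ℝ) = ((d / 2 : ℕ) : ℝ) := by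
      exact_mod_cast card_zeroPairs_add_card_zeroPairs (mem_filter.mp hβ).2
    have hhalf : ((d / 2 : ℕ) : ℝ) = (d : ℝ) / 2 :=
      Nat.cast_div_charZero (even_iff_two_dvd.mp hd)
    rw [zeroPairWeight, show (#(zeroPairs β) : ℝ) = (d : ℝ) / 2 - #(zeroPairs α) by linarith]
  have hcount : (#(B.filter fun β => α + β ∈ Sd d) : ℝ) ≤ 2 ^ (#(zeroPairs α) : ℝ) := by
    rw [Real.rpow_natCast]
    exact_mod_cast card_filter_add_mem_Sd_le hd α B
  simp only [boole_mul]
  rw [← sum_filter, sum_congr rfl hweight, sum_const, nsmul_eq_mul]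
  calc (#(B.filter fun β => α + β ∈ Sd d) : ℝ) * 2 ^ (((d : ℝ) / 2 - #(zeroPairs α)) / 2)
      ≤ 2 ^ (#(zeroPairs α) : ℝ) * 2 ^ (((d : ℝ) / 2 - #(zeroPairs α)) / 2) := by gcongr
    _ = 2 ^ ((d : ℝ) / 4) * zeroPairWeight α := by
      rw [zeroPairWeight, ← Real.rpow_add two_pos, ← Real.rpow_add two_pos]
      ring_nf

end ZeroPairWeight

open scoped Classical in
theorem hankel_Sd_schur_bound_general (d : ℕ) (hdeven : Even d)
    (a b : (Fin d → ℕ) →₀ ℂ) :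
    ‖∑ α ∈ a.support, ∑ β ∈ b.support,
        (if α + β ∈ Sd d then (1 : ℂ) else 0) * a α * b β‖
      ≤ 2 ^ ((d : ℝ) / 4) * l2norm a * l2norm b := by
  have hnorm : ∀ α β : Fin d → ℕ,
      ‖(if α + β ∈ Sd d then (1 : ℂ) else 0)‖ = if α + β ∈ Sd d then 1 else 0 := by
    intro α β
    split_ifs <;> simp
  refine (norm_sum_sum_mul_mul_le _ _ _ _ _).trans ?_
  simp only [hnorm]
  refine sum_sum_mul_le_of_schur (fun _ _ => ite_nonneg zero_le_one le_rfl)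
    (fun γ _ => zeroPairWeight_pos γ) (fun γ _ => zeroPairWeight_pos γ) (by positivity)
    (fun α _ => sum_ite_add_mem_Sd_mul_zeroPairWeight_le hdeven α _) (fun β _ => ?_) _ _
  simpa only [add_comm β] using sum_ite_add_mem_Sd_mul_zeroPairWeight_le hdeven β a.support

open scoped Classical in
/-- **Schur-test bound for the Hankel form with coefficient pattern `S_d`.**
For even `d ≥ 2` and all finitely supported `a, b : ℕ^d → ℂ`,
`|∑_{α+β ∈ S_d} a(α) b(β)| ≤ 2^{d/4} ‖a‖_{ℓ²} ‖b‖_{ℓ²}`. -/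
theorem hankel_Sd_schur_bound (d : ℕ) (hd : 2 ≤ d) (hdeven : Even d)
    (a b : (Fin d → ℕ) →₀ ℂ) :
    ‖∑ α ∈ a.support, ∑ β ∈ b.support,
        (if α + β ∈ Sd d then (1 : ℂ) else 0) * a α * b β‖
      ≤ 2 ^ ((d : ℝ) / 4) * l2norm a * l2norm b :=
  hankel_Sd_schur_bound_general d hdeven a b
end

section
/- Let d ≥ 2 be an even integer and let S_d = {χ ∈ {0,1}^d : χ_{2j-1} + χ_{2j} = 1 for each j = 1, …, d/2}. Then the norm of the bilinear form B(a,b) = ∑_{α, β ∈ ℕ^d, α+β ∈ S_d} a(α) b(β) on finitely supported functions a, b : ℕ^d → ℂ equals exactly 2^{d/4}; that is, sup{|B(a,b)| : ‖a‖_{ℓ²} ≤ 1, ‖b‖_{ℓ²} ≤ 1} = 2^{d/4}. -/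
/-!
Upper bound: the Schur test with the weight `w γ = 2^{-|γ|/2}`. Grouping the coordinates into
the pairs `(2j, 2j+1)` identifies `ℕ^d` with `(ℕ²)^{d/2}`, `S_d` with `{(1,0), (0,1)}^{d/2}` and
`w` with a product weight, so the row sum `∑_{α+β ∈ S_d} w β` factors over the pairs. For a
single pair `a` the factor is `2/√2 = √2` if `a = 0`, `1 = √2 · 2^{-1/2}` if `|a| = 1` and `0`
otherwise, hence at most `√2 · w a`; the kernel is symmetric, so the column sums obey the same
bound, and `|B(a,b)| ≤ 2^{d/4}` on the unit balls.

Lower bound: `a` the normalised indicator of `S_d`, which has `2^{d/2}` elements, and `b = δ_0`.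
-/

open Real

open Finset

theorem Finset.schur_test {ι : Type*} (A B : Finset ι) (K : ι → ι → ℝ) (w : ι → ℝ)
    (Λ : ℝ) (hK : ∀ α β, 0 ≤ K α β) (hw : ∀ α, 0 < w α)
    (hrow : ∀ α ∈ A, ∑ β ∈ B, K α β * w β ≤ Λ * w α)
    (hcol : ∀ β ∈ B, ∑ α ∈ A, K α β * w α ≤ Λ * w β) (x y : ι → ℝ) :
    ∑ α ∈ A, ∑ β ∈ B, K α β * x α * y β ≤
      Λ / 2 * (∑ α ∈ A, x α ^ 2 + ∑ β ∈ B, y β ^ 2) := by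
  have amgm : ∀ α β, K α β * x α * y β ≤
      (K α β * w β * (x α ^ 2 / w α) + K α β * w α * (y β ^ 2 / w β)) / 2 := by
    intro α β
    have hα := hw α
    have hβ := hw β
    have hxy : x α * y β ≤ (w β * (x α ^ 2 / w α) + w α * (y β ^ 2 / w β)) / 2 := by
      rw [mul_div_assoc', mul_div_assoc', div_add_div _ _ hα.ne' hβ.ne', div_div,
        le_div_iff₀ (by positivity)]
      nlinarith [sq_nonneg (w β * x α - w α * y β), mul_pos hα hβ]
    simpa only [mul_assoc, mul_add, mul_div_assoc'] using mul_le_mul_of_nonneg_left hxy (hK α β)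
  calc ∑ α ∈ A, ∑ β ∈ B, K α β * x α * y β
      ≤ ∑ α ∈ A, ∑ β ∈ B,
          (K α β * w β * (x α ^ 2 / w α) + K α β * w α * (y β ^ 2 / w β)) / 2 :=
        sum_le_sum fun α _ => sum_le_sum fun β _ => amgm α β
    _ = ((∑ α ∈ A, (∑ β ∈ B, K α β * w β) * (x α ^ 2 / w α)) +
          ∑ β ∈ B, (∑ α ∈ A, K α β * w α) * (y β ^ 2 / w β)) / 2 := by
        simp only [← sum_div, sum_add_distrib, sum_mul]
        rw [sum_comm (s := A) (t := B) (f := fun α β => K α β * w α * (y β ^ 2 / w β))]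
    _ ≤ ((∑ α ∈ A, Λ * w α * (x α ^ 2 / w α)) +
          ∑ β ∈ B, Λ * w β * (y β ^ 2 / w β)) / 2 := by
        gcongr with α hα β hβ
        · exact div_nonneg (sq_nonneg _) (hw α).le
        · exact hrow α hα
        · exact div_nonneg (sq_nonneg _) (hw β).le
        · exact hcol β hβ
    _ = Λ / 2 * (∑ α ∈ A, x α ^ 2 + ∑ β ∈ B, y β ^ 2) := by
        simp only [mul_assoc, mul_div_cancel₀ _ (hw _).ne', ← mul_sum]
        ring

namespace Sd

variable {d : ℕ}

def pairAt (γ : Fin d → ℕ) (j : Fin (d / 2)) : ℕ × ℕ :=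
  (γ ⟨2 * j, by have := j.isLt; omega⟩, γ ⟨2 * j + 1, by have := j.isLt; omega⟩)

lemma pairAt_add (α β : Fin d → ℕ) : pairAt (α + β) = pairAt α + pairAt β := rfl

def pairEquiv (hd : Even d) : (Fin d → ℕ) ≃ (Fin (d / 2) → ℕ × ℕ) where
  toFun := pairAt
  invFun p k :=
    let j : Fin (d / 2) := ⟨k / 2, by obtain ⟨r, hr⟩ := hd; omega⟩
    if (k : ℕ) % 2 = 0 then (p j).1 else (p j).2
  left_inv γ := by
    funext k
    dsimp only [pairAt]
    split_ifs <;> congr <;> omega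
  right_inv p := by
    funext j
    simp [pairAt, Nat.mul_add_div]

lemma pairAt_injective (hd : Even d) : Function.Injective (pairAt (d := d)) :=
  (pairEquiv hd).injective

def unitPairs : Finset (ℕ × ℕ) := {(1, 0), (0, 1)}

lemma mem_unitPairs {c : ℕ × ℕ} : c ∈ unitPairs ↔ c.1 + c.2 = 1 := by
  obtain ⟨x, y⟩ := c
  simp only [unitPairs, mem_insert, mem_singleton, Prod.mk.injEq]
  omega

lemma mem_iff (hd : Even d) {χ : Fin d → ℕ} : χ ∈ Sd d ↔ ∀ j, pairAt χ j ∈ unitPairs := by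
  simp only [mem_unitPairs]
  refine ⟨And.right, fun h => ⟨fun k => ?_, h⟩⟩
  rw [← (pairEquiv hd).left_inv χ]
  have hpair := h ⟨k / 2, by obtain ⟨r, hr⟩ := hd; omega⟩
  dsimp only [pairEquiv]
  split_ifs <;> omega

def complements (a : ℕ × ℕ) : Finset (ℕ × ℕ) :=
  {c ∈ range 2 ×ˢ range 2 | a + c ∈ unitPairs}

lemma mem_complements {a c : ℕ × ℕ} : c ∈ complements a ↔ a + c ∈ unitPairs := by
  simp only [complements, mem_filter, mem_product, mem_range, and_iff_right_iff_imp,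
    mem_unitPairs, Prod.fst_add, Prod.snd_add]
  omega

noncomputable def pairWeight (c : ℕ × ℕ) : ℝ := (√2)⁻¹ ^ (c.1 + c.2)

lemma pairWeight_pos (c : ℕ × ℕ) : 0 < pairWeight c := by
  unfold pairWeight; positivity

lemma sum_complements_pairWeight_le (a : ℕ × ℕ) :
    ∑ c ∈ complements a, pairWeight c ≤ √2 * pairWeight a := by
  have hs : √2 * (√2)⁻¹ = 1 := mul_inv_cancel₀ (by positivity)
  have hs2 : (√2)⁻¹ + (√2)⁻¹ = √2 := by
    rw [← two_mul, ← div_eq_mul_inv, Real.div_sqrt]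
  have hfiber : ∀ c : ℕ × ℕ, a + c ∈ unitPairs ↔ (a.1 + a.2) + (c.1 + c.2) = 1 := by
    intro c
    rw [mem_unitPairs, Prod.fst_add, Prod.snd_add]
    omega
  simp only [complements, pairWeight, hfiber, sum_filter, sum_product, sum_range_succ,
    sum_range_zero]
  rcases a.1 + a.2 with _ | _ | n
  · norm_num [hs2]
  · norm_num [hs]
  · norm_num [show ∀ k, n + 1 + 1 + k ≠ 1 by omega]

noncomputable def weight (γ : Fin d → ℕ) : ℝ := ∏ j, pairWeight (pairAt γ j)

lemma weight_pos (γ : Fin d → ℕ) : 0 < weight γ :=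
  prod_pos fun _ _ => pairWeight_pos _

open scoped Classical in
lemma sum_weight_le (hd : Even d) (α : Fin d → ℕ) (F : Finset (Fin d → ℕ)) :
    ∑ β ∈ F with α + β ∈ Sd d, weight β ≤ √2 ^ (d / 2) * weight α := by
  have hsub : (F.filter fun β => α + β ∈ Sd d).image pairAt ⊆
      Fintype.piFinset fun j => complements (pairAt α j) := by
    simp only [subset_iff, mem_image, mem_filter, Fintype.mem_piFinset, mem_complements,
      mem_iff hd, pairAt_add]
    rintro _ ⟨β, ⟨-, hβ⟩, rfl⟩ j
    exact hβ j
  calc ∑ β ∈ F with α + β ∈ Sd d, weight β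
      = ∑ p ∈ (F.filter fun β => α + β ∈ Sd d).image pairAt, ∏ j, pairWeight (p j) := by
        rw [sum_image (pairAt_injective hd).injOn]
        rfl
    _ ≤ ∑ p ∈ Fintype.piFinset fun j => complements (pairAt α j), ∏ j, pairWeight (p j) :=
        sum_le_sum_of_subset_of_nonneg hsub fun p _ _ =>
          prod_nonneg fun j _ => (pairWeight_pos _).le
    _ = ∏ j, ∑ c ∈ complements (pairAt α j), pairWeight c := (prod_univ_sum _ _).symm
    _ ≤ ∏ j, √2 * pairWeight (pairAt α j) :=
        prod_le_prod (fun _ _ => sum_nonneg fun c _ => (pairWeight_pos c).le)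
          fun _ _ => sum_complements_pairWeight_le _
    _ = √2 ^ (d / 2) * weight α := by
        rw [prod_mul_distrib, prod_const, card_univ, Fintype.card_fin, weight]

noncomputable def toFinset (hd : Even d) : Finset (Fin d → ℕ) :=
  (Fintype.piFinset fun _ => unitPairs).map (pairEquiv hd).symm.toEmbedding

lemma mem_toFinset (hd : Even d) {χ : Fin d → ℕ} : χ ∈ Sd.toFinset hd ↔ χ ∈ Sd d := by
  rw [Sd.toFinset, mem_map_equiv, Equiv.symm_symm, Fintype.mem_piFinset, mem_iff hd]
  rfl

lemma card_toFinset (hd : Even d) : #(Sd.toFinset hd) = 2 ^ (d / 2) := by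
  rw [Sd.toFinset, card_map, Fintype.card_piFinset_const]
  rfl

end Sd

open scoped Classical in
noncomputable def hankelForm (d : ℕ) (a b : (Fin d → ℕ) →₀ ℂ) : ℂ :=
  ∑ α ∈ a.support, ∑ β ∈ b.support, (if α + β ∈ Sd d then (1 : ℂ) else 0) * a α * b β

lemma l2norm_sq {d : ℕ} (a : (Fin d → ℕ) →₀ ℂ) :
    l2norm a ^ 2 = ∑ α ∈ a.support, ‖a α‖ ^ 2 :=
  Real.sq_sqrt (sum_nonneg fun _ _ => sq_nonneg _)

lemma support_indicator_const {d : ℕ} (s : Finset (Fin d → ℕ)) {c : ℂ} (hc : c ≠ 0) :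
    (Finsupp.indicator s fun _ _ => c).support = s := by
  ext α
  rw [Finsupp.mem_support_iff, Finsupp.indicator_apply]
  split_ifs with h <;> simp [h, hc]

lemma l2norm_indicator_const {d : ℕ} (s : Finset (Fin d → ℕ)) {c : ℂ} (hc : c ≠ 0) :
    l2norm (Finsupp.indicator s fun _ _ => c) = √(#s) * ‖c‖ := by
  rw [l2norm, support_indicator_const s hc,
    sum_congr rfl fun α hα => by rw [Finsupp.indicator_of_mem hα], sum_const, nsmul_eq_mul,
    Real.sqrt_mul (Nat.cast_nonneg _), Real.sqrt_sq (norm_nonneg _)]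

open scoped Classical in
lemma norm_hankelForm_le {d : ℕ} (hd : Even d) (a b : (Fin d → ℕ) →₀ ℂ) :
    ‖hankelForm d a b‖ ≤ √2 ^ (d / 2) / 2 * (l2norm a ^ 2 + l2norm b ^ 2) := by
  set K : (Fin d → ℕ) → (Fin d → ℕ) → ℝ := fun α β => if α + β ∈ Sd d then 1 else 0
  have hK : ∀ α β, 0 ≤ K α β := fun α β => by dsimp only [K]; split_ifs <;> norm_num
  have hterm : ∀ α β,
      ‖(if α + β ∈ Sd d then (1 : ℂ) else 0) * a α * b β‖ = K α β * ‖a α‖ * ‖b β‖ := by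
    intro α β
    simp only [K, norm_mul, apply_ite norm, norm_one, norm_zero]
  rw [l2norm_sq, l2norm_sq]
  calc ‖hankelForm d a b‖
      ≤ ∑ α ∈ a.support, ∑ β ∈ b.support, K α β * ‖a α‖ * ‖b β‖ := by
        refine (norm_sum_le _ _).trans (sum_le_sum fun α _ => (norm_sum_le _ _).trans ?_)
        simp only [hterm, le_refl]
    _ ≤ _ := Finset.schur_test _ _ K Sd.weight _ hK Sd.weight_pos
        (fun α _ => by simpa only [K, boole_mul, sum_filter] using Sd.sum_weight_le hd α _)
        (fun β _ => by simpa only [K, boole_mul, sum_filter, add_comm] using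
          Sd.sum_weight_le hd β _) _ _

lemma exists_norm_hankelForm_eq {d : ℕ} (hd : Even d) :
    ∃ a b : (Fin d → ℕ) →₀ ℂ,
      l2norm a ≤ 1 ∧ l2norm b ≤ 1 ∧ ‖hankelForm d a b‖ = √2 ^ (d / 2) := by
  set t : ℝ := √2 ^ (d / 2)
  have ht : 0 < t := by positivity
  have ht2 : (2 : ℝ) ^ (d / 2) = t ^ 2 := by
    rw [← pow_mul, mul_comm, pow_mul, Real.sq_sqrt zero_le_two]
  have hc : ((t⁻¹ : ℝ) : ℂ) ≠ 0 := by exact_mod_cast (inv_pos.mpr ht).ne'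
  set a := Finsupp.indicator (Sd.toFinset hd) fun _ _ => ((t⁻¹ : ℝ) : ℂ)
  set b := Finsupp.indicator ({0} : Finset (Fin d → ℕ)) fun _ _ => (1 : ℂ)
  have hab : hankelForm d a b = #(Sd.toFinset hd) * ((t⁻¹ : ℝ) : ℂ) := by
    rw [hankelForm, support_indicator_const _ hc, support_indicator_const _ one_ne_zero,
      ← nsmul_eq_mul, ← sum_const]
    refine sum_congr rfl fun α hα => ?_
    rw [sum_singleton, add_zero, if_pos ((Sd.mem_toFinset hd).mp hα),
      Finsupp.indicator_of_mem hα, Finsupp.indicator_of_mem (mem_singleton_self 0), one_mul,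
      mul_one]
  refine ⟨a, b, ?_, ?_, ?_⟩
  · rw [l2norm_indicator_const _ hc, Sd.card_toFinset, Nat.cast_pow, Nat.cast_ofNat, ht2,
      Real.sqrt_sq ht.le, Complex.norm_real, Real.norm_of_nonneg (inv_pos.mpr ht).le,
      mul_inv_cancel₀ ht.ne']
  · rw [l2norm_indicator_const _ one_ne_zero, card_singleton, Nat.cast_one, Real.sqrt_one,
      norm_one, mul_one]
  · rw [hab, Sd.card_toFinset, norm_mul, Complex.norm_real,
      Real.norm_of_nonneg (inv_pos.mpr ht).le]
    push_cast
    rw [Complex.norm_pow, Complex.norm_ofNat, ht2, sq, mul_assoc, mul_inv_cancel₀ ht.ne',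
      mul_one]

lemma sqrt_two_pow_half_eq_rpow {d : ℕ} (hd : Even d) :
    √2 ^ (d / 2) = (2 : ℝ) ^ ((d : ℝ) / 4) := by
  obtain ⟨r, rfl⟩ := hd
  rw [Real.sqrt_eq_rpow, ← Real.rpow_mul_natCast zero_le_two, show (r + r) / 2 = r by omega]
  push_cast
  ring_nf

open scoped Classical in
theorem hankel_Sd_norm_eq_general (d : ℕ) (hdeven : Even d) :
    sSup {r : ℝ | ∃ a b : (Fin d → ℕ) →₀ ℂ, l2norm a ≤ 1 ∧ l2norm b ≤ 1 ∧
        r = ‖∑ α ∈ a.support, ∑ β ∈ b.support,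
              (if α + β ∈ Sd d then (1 : ℂ) else 0) * a α * b β‖}
      = 2 ^ ((d : ℝ) / 4) := by
  rw [← sqrt_two_pow_half_eq_rpow hdeven]
  refine IsGreatest.csSup_eq ⟨?_, ?_⟩
  · obtain ⟨a, b, ha, hb, hab⟩ := exists_norm_hankelForm_eq hdeven
    exact ⟨a, b, ha, hb, hab.symm⟩
  · rintro r ⟨a, b, ha, hb, rfl⟩
    have hsq : ∀ f : (Fin d → ℕ) →₀ ℂ, l2norm f ≤ 1 → l2norm f ^ 2 ≤ 1 :=
      fun f hf => pow_le_one₀ (Real.sqrt_nonneg _) hf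
    calc ‖hankelForm d a b‖
        ≤ √2 ^ (d / 2) / 2 * (l2norm a ^ 2 + l2norm b ^ 2) := norm_hankelForm_le hdeven a b
      _ ≤ √2 ^ (d / 2) / 2 * (1 + 1) := by gcongr <;> exact hsq _ ‹_›
      _ = √2 ^ (d / 2) := by ring

open scoped Classical in
/-- **The norm of the Hankel form with coefficient pattern `S_d` is exactly `2^{d/4}`:**
`sup {|B(a,b)| : ‖a‖_{ℓ²} ≤ 1, ‖b‖_{ℓ²} ≤ 1} = 2^{d/4}`, where
`B(a,b) = ∑_{α+β ∈ S_d} a(α) b(β)`. -/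
theorem hankel_Sd_norm_eq (d : ℕ) (hd : 2 ≤ d) (hdeven : Even d) :
    sSup {r : ℝ | ∃ a b : (Fin d → ℕ) →₀ ℂ, l2norm a ≤ 1 ∧ l2norm b ≤ 1 ∧
        r = ‖∑ α ∈ a.support, ∑ β ∈ b.support,
              (if α + β ∈ Sd d then (1 : ℂ) else 0) * a α * b β‖}
      = 2 ^ ((d : ℝ) / 4) :=
  hankel_Sd_norm_eq_general d hdeven
end

section
/- Let d ≥ 2 be an even integer and let S_d = {χ ∈ {0,1}^d : χ_{2j-1} + χ_{2j} = 1 for each j = 1, …, d/2}. If φ ∈ L^∞(𝕋^d) satisfies φ̂(χ) = 1 for every χ ∈ S_d, then ‖φ‖_{L^∞(𝕋^d)} ≥ (π/2)^{d/2}. -/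
open MeasureTheory Real

/-- Normalized Haar probability measure on the `d`-dimensional torus `𝕋^d`,
modelled as `Fin d → AddCircle 1`. -/
noncomputable def torusMeasure (d : ℕ) : Measure (Fin d → AddCircle (1 : ℝ)) :=
  Measure.pi fun _ => AddCircle.haarAddCircle

/-- The Fourier coefficient `φ̂(α) = ∫_{𝕋^d} φ(z) z^{-α} dm(z)`, where
`z^α = ∏_j z_j^{α_j}` is the monomial `x ↦ ∏_j fourier (α j) (x j)`. -/
noncomputable def fourierCoef {d : ℕ} (φ : (Fin d → AddCircle (1 : ℝ)) → ℂ)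
    (α : Fin d → ℤ) : ℂ :=
  ∫ x, φ x * ∏ j, fourier (-(α j)) (x j) ∂(torusMeasure d)

/-! Pair `φ` with `conj f_d`, where `f_d z = ∏ⱼ (z_{2j-1} + z_{2j})`. Expanding the product,
`conj f_d` is the sum of the `2^{d/2}` characters `z^{-χ}`, `χ ∈ S_d`, so
`∫ φ · conj f_d = 2^{d/2}`. On the other hand this integral is at most `‖φ‖_∞ ‖f_d‖₁`, and
`‖f_d‖₁ = (4/π)^{d/2}`: the pairs of coordinates are independent, and on each pair
`∫∫ |z + w| = ∫ |1 + w| = ∫₀¹ 2 |cos πs| ds = 4/π`. -/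

theorem MeasureTheory.Lp.ae_norm_le_norm_top {α E : Type*} [MeasurableSpace α] {μ : Measure α}
    [NormedAddCommGroup E] (φ : Lp E ⊤ μ) : ∀ᵐ x ∂μ, ‖φ x‖ ≤ ‖φ‖ := by
  filter_upwards [enorm_ae_le_eLpNormEssSup φ μ] with x hx
  rw [Lp.norm_def, eLpNorm_exponent_top, ← toReal_enorm]
  exact ENNReal.toReal_mono (by simpa [eLpNorm_exponent_top] using Lp.eLpNorm_ne_top φ) hx

theorem norm_integral_mul_le_norm_mul_integral_norm {α 𝕜 : Type*} [MeasurableSpace α] [RCLike 𝕜]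
    {μ : Measure α} (φ : Lp 𝕜 ⊤ μ) {g : α → 𝕜} (hg : Integrable g μ) :
    ‖∫ x, φ x * g x ∂μ‖ ≤ ‖φ‖ * ∫ x, ‖g x‖ ∂μ :=
  calc ‖∫ x, φ x * g x ∂μ‖ ≤ ∫ x, ‖φ x * g x‖ ∂μ := norm_integral_le_integral_norm _
    _ ≤ ∫ x, ‖φ‖ * ‖g x‖ ∂μ := by
      refine integral_mono_of_nonneg (ae_of_all _ fun _ => norm_nonneg _) (hg.norm.const_mul _) ?_
      filter_upwards [Lp.ae_norm_le_norm_top φ] with x hx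
      rw [norm_mul]
      gcongr
    _ = ‖φ‖ * ∫ x, ‖g x‖ ∂μ := integral_const_mul _ _

theorem integral_prod_pairs_eq_pow {ι κ α 𝕜 : Type*} [Fintype ι] [Fintype κ] [RCLike 𝕜]
    [MeasurableSpace α] (μ : Measure α) [SigmaFinite μ] (e : ι ⊕ ι ≃ κ) (g : α × α → 𝕜) :
    ∫ x, ∏ j, g (x (e (.inl j)), x (e (.inr j))) ∂Measure.pi (fun _ : κ => μ) =
      (∫ p, g p ∂μ.prod μ) ^ Fintype.card ι := by
  rw [← (measurePreserving_piCongrLeft (fun _ => μ) e).integral_comp',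
    ← (measurePreserving_sumPiEquivProdPi_symm (fun _ => μ)).integral_comp',
    ← (measurePreserving_arrowProdEquivProdArrow α α ι (fun _ => μ) (fun _ => μ)).integral_comp',
    ← integral_fintype_prod_eq_pow]
  congr 1
  ext y
  simp [MeasurableEquiv.piCongrLeft, MeasurableEquiv.arrowProdEquivProdArrow,
    MeasurableEquiv.coe_sumPiEquivProdPi_symm]

theorem MeasureTheory.Integrable.mul_prod_fourier {T : ℝ} [Fact (0 < T)] {κ : Type*} [Fintype κ]
    {μ : Measure (κ → AddCircle T)} {φ : (κ → AddCircle T) → ℂ} (hφ : Integrable φ μ)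
    (n : κ → ℤ) : Integrable (fun x => φ x * ∏ k, fourier (n k) (x k)) μ :=
  hφ.mul_bdd (c := 1) (by fun_prop : Continuous _).aestronglyMeasurable <|
    ae_of_all _ fun x => by
      rw [norm_prod]
      exact (Finset.prod_eq_one fun k _ => by rw [fourier_apply, Circle.norm_coe]).le

theorem norm_fourier_add_fourier {T : ℝ} [Fact (0 < T)] (n : ℤ) (a b : AddCircle T) :
    ‖fourier n a + fourier n b‖ = ‖1 + fourier n (b - a)‖ := by
  have hb : (fourier n b : ℂ) = fourier n a * fourier n (b - a) := by
    rw [fourier_apply, fourier_apply, fourier_apply, ← Circle.coe_mul, ← AddCircle.toCircle_add,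
      ← smul_add, add_sub_cancel]
  rw [hb, ← mul_one_add, norm_mul, fourier_apply, Circle.norm_coe, one_mul]

theorem norm_one_add_fourier_coe (n : ℤ) (s : ℝ) :
    ‖1 + fourier n (s : UnitAddCircle)‖ = 2 * |cos (π * n * s)| := by
  set θ := π * n * s
  -- `1 + e^{2iθ} = e^{iθ} (e^{-iθ} + e^{iθ})`
  have hfactor :
      1 + fourier n (s : UnitAddCircle) = Complex.exp (θ * Complex.I) * (2 * Complex.cos θ) := by
    rw [fourier_coe_apply, Complex.cos, mul_div_cancel₀ _ two_ne_zero, mul_add, ← Complex.exp_add,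
      ← Complex.exp_add]
    push_cast [θ]
    ring_nf
    rw [Complex.exp_zero, add_comm]
  rw [hfactor, norm_mul, Complex.norm_exp_ofReal_mul_I, one_mul, ← Complex.ofReal_cos, norm_mul,
    Complex.norm_real, Real.norm_eq_abs, Complex.norm_two]

theorem integral_norm_one_add_fourier_neg_one :
    ∫ t, ‖1 + fourier (-1) t‖ ∂AddCircle.haarAddCircle (T := 1) = 4 / π := by
  rw [AddCircle.integral_haarAddCircle, inv_one, one_smul,
    ← UnitAddCircle.intervalIntegral_preimage (-1 / 2)]
  have hcos : ∀ s ∈ Set.uIcc (-1 / 2 : ℝ) (-1 / 2 + 1),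
      ‖1 + fourier (-1) (s : UnitAddCircle)‖ = 2 * cos (π * s) := by
    intro s hs
    rw [Set.uIcc_of_le (by norm_num)] at hs
    have hcos_nonneg : 0 ≤ cos (π * s) :=
      cos_nonneg_of_mem_Icc ⟨by nlinarith [hs.1, pi_pos], by nlinarith [hs.2, pi_pos]⟩
    rw [norm_one_add_fourier_coe, Int.cast_neg, Int.cast_one, mul_neg_one, neg_mul, cos_neg,
      abs_of_nonneg hcos_nonneg]
  rw [intervalIntegral.integral_congr hcos, intervalIntegral.integral_const_mul,
    intervalIntegral.integral_comp_mul_left (fun s => cos s) pi_ne_zero, integral_cos,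
    show π * (-1 / 2 + 1) = π / 2 by ring, show π * (-1 / 2) = -(π / 2) by ring, sin_neg,
    sin_pi_div_two, smul_eq_mul]
  field_simp
  ring

theorem integral_norm_fourier_add_fourier :
    ∫ p, ‖fourier (-1) p.1 + fourier (-1) p.2‖
      ∂(AddCircle.haarAddCircle.prod AddCircle.haarAddCircle :
        Measure (UnitAddCircle × UnitAddCircle)) = 4 / π := by
  have hint : Integrable (fun p : UnitAddCircle × UnitAddCircle =>
      ‖fourier (-1) p.1 + fourier (-1) p.2‖)
      (AddCircle.haarAddCircle.prod AddCircle.haarAddCircle) :=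
    (by fun_prop : Continuous _).integrable_of_hasCompactSupport
      (HasCompactSupport.of_compactSpace _)
  simp_rw [integral_prod _ hint, norm_fourier_add_fourier,
    integral_sub_right_eq_self (fun b => ‖1 + fourier (-1) b‖),
    integral_norm_one_add_fourier_neg_one, integral_const, probReal_univ, one_smul]

section Pairing

variable {ι κ : Type*} [Fintype ι]

/-- `conj f_d`, with the pairs of coordinates given by `e`. -/
noncomputable def conjPairProduct (e : ι ⊕ ι ≃ κ) (x : κ → UnitAddCircle) : ℂ :=
  ∏ j, (fourier (-1) (x (e (.inl j))) + fourier (-1) (x (e (.inr j))))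

theorem integrable_conjPairProduct [Fintype κ] (e : ι ⊕ ι ≃ κ)
    (μ : Measure (κ → UnitAddCircle)) [IsFiniteMeasure μ] : Integrable (conjPairProduct e) μ :=
  (by unfold conjPairProduct; fun_prop : Continuous _).integrable_of_hasCompactSupport
    (HasCompactSupport.of_compactSpace _)

theorem integral_norm_conjPairProduct [Fintype κ] (e : ι ⊕ ι ≃ κ) :
    ∫ x, ‖conjPairProduct e x‖ ∂Measure.pi (fun _ : κ => AddCircle.haarAddCircle) =
      (4 / π) ^ Fintype.card ι := by
  simp_rw [conjPairProduct, norm_prod]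
  rw [integral_prod_pairs_eq_pow _ e fun p => ‖fourier (-1) p.1 + fourier (-1) p.2‖,
    integral_norm_fourier_add_fourier]

variable [DecidableEq ι]

/-- The index in `S_d` that picks the first coordinate of the pairs in `t` and the second one of
the others. -/
def pairIndex (e : ι ⊕ ι ≃ κ) (t : Finset ι) (k : κ) : ℕ :=
  (e.symm k).elim (fun j => if j ∈ t then 1 else 0) (fun j => if j ∈ t then 0 else 1)

theorem prod_fourier_neg_pairIndex [Fintype κ] (e : ι ⊕ ι ≃ κ) (t : Finset ι)
    (x : κ → UnitAddCircle) :
    ∏ k, fourier (-(pairIndex e t k : ℤ)) (x k) =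
      (∏ j ∈ t, fourier (-1) (x (e (.inl j)))) * ∏ j ∈ tᶜ, fourier (-1) (x (e (.inr j))) := by
  rw [← e.prod_comp, Fintype.prod_sum_type, ← Fintype.prod_ite_mem t, ← Fintype.prod_ite_mem tᶜ]
  congr 1 <;> refine Finset.prod_congr rfl fun j _ => ?_ <;> by_cases hj : j ∈ t <;>
    simp [pairIndex, hj]

theorem conjPairProduct_eq_sum [Fintype κ] (e : ι ⊕ ι ≃ κ) (x : κ → UnitAddCircle) :
    conjPairProduct e x = ∑ t, ∏ k, fourier (-(pairIndex e t k : ℤ)) (x k) := by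
  simp_rw [conjPairProduct, Fintype.prod_add, prod_fourier_neg_pairIndex]

instance (d : ℕ) : IsProbabilityMeasure (torusMeasure d) := by
  unfold torusMeasure; infer_instance

theorem integral_mul_conjPairProduct {d : ℕ} (e : ι ⊕ ι ≃ Fin d)
    {φ : (Fin d → UnitAddCircle) → ℂ} (hφ : Integrable φ (torusMeasure d)) :
    ∫ x, φ x * conjPairProduct e x ∂torusMeasure d =
      ∑ t, fourierCoef φ (fun k => (pairIndex e t k : ℤ)) := by
  simp_rw [conjPairProduct_eq_sum, Finset.mul_sum]
  exact integral_finsetSum _ fun t _ => hφ.mul_prod_fourier _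

end Pairing

noncomputable def pairEquiv {d : ℕ} (hd : Even d) : Fin (d / 2) ⊕ Fin (d / 2) ≃ Fin d :=
  Equiv.ofBijective
    (Sum.elim (fun j => ⟨2 * j, by have := j.isLt; omega⟩)
      (fun j => ⟨2 * j + 1, by have := j.isLt; omega⟩)) <| by
    rw [Fintype.bijective_iff_injective_and_card, Fintype.card_sum, Fintype.card_fin,
      Fintype.card_fin, ← two_mul, Nat.two_mul_div_two_of_even hd]
    refine ⟨?_, rfl⟩
    rintro (i | i) (j | j) h <;>
      simp only [Sum.elim_inl, Sum.elim_inr, Fin.ext_iff, Sum.inl.injEq, Sum.inr.injEq,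
        reduceCtorEq] at h ⊢ <;> omega

theorem pairEquiv_symm_even {d : ℕ} (hd : Even d) (j : Fin (d / 2)) (h : 2 * (j : ℕ) < d) :
    (pairEquiv hd).symm ⟨2 * j, h⟩ = .inl j :=
  (pairEquiv hd).symm_apply_eq.2 rfl

theorem pairEquiv_symm_odd {d : ℕ} (hd : Even d) (j : Fin (d / 2)) (h : 2 * (j : ℕ) + 1 < d) :
    (pairEquiv hd).symm ⟨2 * j + 1, h⟩ = .inr j :=
  (pairEquiv hd).symm_apply_eq.2 rfl

theorem pairIndex_mem_Sd {d : ℕ} (hd : Even d) (t : Finset (Fin (d / 2))) :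
    pairIndex (pairEquiv hd) t ∈ Sd d := by
  refine ⟨fun k => ?_, fun j => ?_⟩
  · unfold pairIndex
    rcases (pairEquiv hd).symm k with j | j <;>
      simp only [Sum.elim_inl, Sum.elim_inr] <;> split_ifs <;> omega
  · by_cases hj : j ∈ t <;> simp [pairIndex, pairEquiv_symm_even, pairEquiv_symm_odd, hj]

theorem symbol_norm_lower_bound_general (d : ℕ) (hdeven : Even d)
    (φ : Lp ℂ ⊤ (torusMeasure d))
    (hφ : ∀ χ ∈ Sd d, fourierCoef (⇑φ) (fun j => (χ j : ℤ)) = 1) :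
    (π / 2) ^ ((d : ℝ) / 2) ≤ ‖φ‖ := by
  set e := pairEquiv hdeven
  have hpairing : ∫ x, φ x * conjPairProduct e x ∂torusMeasure d = 2 ^ (d / 2) := by
    rw [integral_mul_conjPairProduct e ((Lp.memLp φ).integrable le_top),
      Finset.sum_congr rfl fun t _ => hφ _ (pairIndex_mem_Sd hdeven t)]
    simp [Fintype.card_finset]
  have hnorm : ∫ x, ‖conjPairProduct e x‖ ∂torusMeasure d = (4 / π) ^ (d / 2) := by
    rw [torusMeasure, integral_norm_conjPairProduct, Fintype.card_fin]
  have hbound : (2 : ℝ) ^ (d / 2) ≤ ‖φ‖ * (4 / π) ^ (d / 2) := by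
    simpa [hpairing, hnorm] using
      norm_integral_mul_le_norm_mul_integral_norm φ (integrable_conjPairProduct e _)
  have hexponent : (d : ℝ) / 2 = (d / 2 : ℕ) := by
    rw [Nat.cast_div (even_iff_two_dvd.mp hdeven) two_ne_zero, Nat.cast_two]
  rw [hexponent, rpow_natCast]
  refine le_of_mul_le_mul_right ?_ (pow_pos (by positivity : 0 < 4 / π) (d / 2))
  rwa [← mul_pow, show π / 2 * (4 / π) = 2 by field_simp; ring]

/-- **Lower bound for symbols of the `S_d` Hankel form.** If `φ ∈ L^∞(𝕋^d)`
has `φ̂(χ) = 1` for every `χ ∈ S_d`, then `‖φ‖_{L^∞} ≥ (π/2)^{d/2}`. -/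
theorem symbol_norm_lower_bound (d : ℕ) (hd : 2 ≤ d) (hdeven : Even d)
    (φ : Lp ℂ ⊤ (torusMeasure d))
    (hφ : ∀ χ ∈ Sd d, fourierCoef (⇑φ) (fun j => (χ j : ℤ)) = 1) :
    (π / 2) ^ ((d : ℝ) / 2) ≤ ‖φ‖ :=
  symbol_norm_lower_bound_general d hdeven φ hφ
end

section
/- The best Nehari constants are nondecreasing in the dimension: for every positive integer d, C_d ≤ C_{d+1}. Concretely: suppose C ≥ 0 is such that for every finitely supported ρ : ℕ^{d+1} → ℂ and M ≥ 0 with |∑_{α,β ∈ ℕ^{d+1}} ρ(α+β) a(α) b(β)| ≤ M ‖a‖_{ℓ²} ‖b‖_{ℓ²} for all finitely supported a, b : ℕ^{d+1} → ℂ, there exists φ ∈ L^∞(𝕋^{d+1}) with φ̂(α) = ρ(α) for all α ∈ ℕ^{d+1} and ‖φ‖_{L^∞} ≤ C·M. Then C has the same property in dimension d: for every finitely supported ρ' : ℕ^d → ℂ and M' ≥ 0 with |∑_{α,β ∈ ℕ^d} ρ'(α+β) a(α) b(β)| ≤ M' ‖a‖_{ℓ²} ‖b‖_{ℓ²} for all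 finitely supported a, b : ℕ^d → ℂ, there exists φ' ∈ L^∞(𝕋^d) with φ̂'(α) = ρ'(α) for all α ∈ ℕ^d and ‖φ'‖_{L^∞} ≤ C·M'. -/
open MeasureTheory Real

/-- The Hankel bilinear form `(a, b) ↦ ∑_{α,β} ρ(α+β) a(α) b(β)` with symbol
coefficients `ρ`. -/
noncomputable def hankelSum {d : ℕ} (ρ : (Fin d → ℕ) →₀ ℂ) (a b : (Fin d → ℕ) →₀ ℂ) : ℂ :=
  ∑ α ∈ a.support, ∑ β ∈ b.support, ρ (α + β) * a α * b β

/-!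
Extend the symbol `ρ'` on `ℕ^d` by zero to `ℕ^{d+1}`. Since it vanishes off the slice
`{γ | γ_{d+1} = 0}`, its Hankel form only sees the restrictions of `a` and `b` to that slice,
whose `ℓ²` norms are no larger, so the extension keeps the bound `M'`. A bounded symbol `φ` on
`𝕋^{d+1}` of the extension gives one on `𝕋^d` by integrating out the last variable: averaging
does not increase the sup norm, and by Fubini the Fourier coefficient of the average at `α`
is that of `φ` at `(α, 0)`, which is `ρ'(α)`.
-/

def snocZero (M : Type*) [Zero M] (d : ℕ) : (Fin d → M) ↪ (Fin (d + 1) → M) :=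
  ⟨fun α => Fin.snoc α 0, Fin.snoc_left_injective (α := fun _ => M) 0⟩

@[simp]
lemma snocZero_apply {M : Type*} [Zero M] {d : ℕ} (α : Fin d → M) :
    snocZero M d α = Fin.snoc α 0 := rfl

lemma snocZero_add {M : Type*} [AddZeroClass M] {d : ℕ} (α β : Fin d → M) :
    snocZero M d (α + β) = snocZero M d α + snocZero M d β := by
  ext j
  refine Fin.lastCases ?_ (fun i => ?_) j <;> simp

section SliceRestrict

variable {M R : Type*} [Zero M] [Zero R] {d : ℕ}

lemma exists_snocZero_eq_iff {γ : Fin (d + 1) → M} :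
    (∃ α, snocZero M d α = γ) ↔ γ (Fin.last d) = 0 := by
  refine ⟨fun ⟨α, hα⟩ => hα ▸ by simp, fun hγ => ⟨Fin.init γ, ?_⟩⟩
  simpa [hγ] using Fin.snoc_init_self γ

lemma embDomain_snocZero_eq_zero (ρ : (Fin d → M) →₀ R) {γ : Fin (d + 1) → M}
    (hγ : γ (Fin.last d) ≠ 0) : ρ.embDomain (snocZero M d) γ = 0 :=
  Finsupp.embDomain_of_notMem_range _ _ _ fun hrange => hγ (exists_snocZero_eq_iff.1 hrange)

noncomputable def sliceRestrict (a : (Fin (d + 1) → M) →₀ R) : (Fin d → M) →₀ R :=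
  a.comapDomain (snocZero M d) (snocZero M d).injective.injOn

@[simp]
lemma sliceRestrict_apply (a : (Fin (d + 1) → M) →₀ R) (α : Fin d → M) :
    sliceRestrict a α = a (snocZero M d α) := rfl

lemma map_support_sliceRestrict [DecidableEq M] (a : (Fin (d + 1) → M) →₀ R) :
    (sliceRestrict a).support.map (snocZero M d) = a.support.filter (· (Fin.last d) = 0) := by
  ext γ
  simp only [Finset.mem_map, Finsupp.mem_support_iff, sliceRestrict_apply, Finset.mem_filter,
    ← exists_snocZero_eq_iff]
  constructor
  · rintro ⟨α, hα, rfl⟩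
    exact ⟨hα, α, rfl⟩
  · rintro ⟨hγ, α, rfl⟩
    exact ⟨α, hγ, rfl⟩

end SliceRestrict

lemma l2norm_sliceRestrict_le {d : ℕ} (a : (Fin (d + 1) → ℕ) →₀ ℂ) :
    l2norm (sliceRestrict a) ≤ l2norm a := by
  refine Real.sqrt_le_sqrt ?_
  calc ∑ α ∈ (sliceRestrict a).support, ‖sliceRestrict a α‖ ^ 2
      = ∑ γ ∈ (sliceRestrict a).support.map (snocZero ℕ d), ‖a γ‖ ^ 2 := by
        rw [Finset.sum_map]; rfl
    _ ≤ ∑ γ ∈ a.support, ‖a γ‖ ^ 2 := by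
        rw [map_support_sliceRestrict]
        exact Finset.sum_le_sum_of_subset_of_nonneg (Finset.filter_subset _ _)
          fun _ _ _ => by positivity

lemma hankelSum_embDomain_snocZero {d : ℕ} (ρ : (Fin d → ℕ) →₀ ℂ)
    (a b : (Fin (d + 1) → ℕ) →₀ ℂ) :
    hankelSum (ρ.embDomain (snocZero ℕ d)) a b
      = hankelSum ρ (sliceRestrict a) (sliceRestrict b) := by
  have last_eq_zero {α β : Fin (d + 1) → ℕ}
      (h : ρ.embDomain (snocZero ℕ d) (α + β) * a α * b β ≠ 0) :
      α (Fin.last d) = 0 ∧ β (Fin.last d) = 0 := by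
    by_contra hne
    refine h ?_
    rw [embDomain_snocZero_eq_zero, zero_mul, zero_mul]
    simp only [Pi.add_apply]
    omega
  unfold hankelSum
  rw [← Finset.sum_filter_of_ne (p := (· (Fin.last d) = 0)) fun α _ hα => ?_]
  · rw [← map_support_sliceRestrict, Finset.sum_map]
    refine Finset.sum_congr rfl fun α _ => ?_
    rw [← Finset.sum_filter_of_ne fun β _ hβ => (last_eq_zero hβ).2,
      ← map_support_sliceRestrict, Finset.sum_map]
    refine Finset.sum_congr rfl fun β _ => ?_
    rw [← snocZero_add, Finsupp.embDomain_apply_self, sliceRestrict_apply, sliceRestrict_apply]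
  · obtain ⟨β, -, hβ⟩ := Finset.exists_ne_zero_of_sum_ne_zero hα
    exact (last_eq_zero hβ).1

lemma hankelSum_embDomain_snocZero_le {d : ℕ} {ρ : (Fin d → ℕ) →₀ ℂ} {M : ℝ} (hM : 0 ≤ M)
    (hρ : ∀ a b, ‖hankelSum ρ a b‖ ≤ M * l2norm a * l2norm b) (a b : (Fin (d + 1) → ℕ) →₀ ℂ) :
    ‖hankelSum (ρ.embDomain (snocZero ℕ d)) a b‖ ≤ M * l2norm a * l2norm b := by
  rw [hankelSum_embDomain_snocZero]
  calc _ ≤ M * l2norm (sliceRestrict a) * l2norm (sliceRestrict b) := hρ _ _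
    _ ≤ M * l2norm a * l2norm b :=
      mul_le_mul (mul_le_mul_of_nonneg_left (l2norm_sliceRestrict_le a) hM)
        (l2norm_sliceRestrict_le b) (Real.sqrt_nonneg _) (mul_nonneg hM (Real.sqrt_nonneg _))

theorem MeasureTheory.Lp.exists_stronglyMeasurable_norm_le_ae_eq {α E : Type*}
    [MeasurableSpace α] {μ : Measure α} [NormedAddCommGroup E] (f : Lp E ⊤ μ) :
    ∃ g : α → E, StronglyMeasurable g ∧ (∀ x, ‖g x‖ ≤ ‖f‖) ∧ f =ᵐ[μ] g := by
  have hf := Lp.aestronglyMeasurable f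
  have hbound : ∀ᵐ x ∂μ, ‖f x‖ ≤ ‖f‖ := by
    simpa only [Lp.norm_def, toReal_eLpNorm hf] using ae_le_lpNorm_exponent_top (Lp.memLp f)
  refine ⟨fun x => if ‖hf.mk f x‖ ≤ ‖f‖ then hf.mk f x else 0, ?_, fun x => ?_, ?_⟩
  · exact hf.stronglyMeasurable_mk.ite
      (measurableSet_le hf.stronglyMeasurable_mk.norm.measurable measurable_const)
      stronglyMeasurable_const
  · dsimp only
    split_ifs with hx
    exacts [hx, by simp]
  · filter_upwards [hf.ae_eq_mk, hbound] with x hmk hx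
    rw [if_pos (hmk ▸ hx), hmk]

def snocMeasurableEquiv (X : Type*) [MeasurableSpace X] (d : ℕ) :
    X × (Fin d → X) ≃ᵐ (Fin (d + 1) → X) :=
  (MeasurableEquiv.piFinSuccAbove (fun _ => X) (Fin.last d)).symm

section IntegrateLast

variable {X E : Type*} [MeasurableSpace X] {d : ℕ} [NormedAddCommGroup E] [NormedSpace ℝ E]

@[simp]
lemma snocMeasurableEquiv_apply (t : X) (x : Fin d → X) :
    snocMeasurableEquiv X d (t, x) = Fin.snoc x t := by
  simp [snocMeasurableEquiv, Fin.insertNthEquiv, Fin.insertNth_last']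

lemma measurePreserving_snocMeasurableEquiv (μ : Measure X) [SigmaFinite μ] :
    MeasurePreserving (snocMeasurableEquiv X d) (μ.prod (Measure.pi fun _ => μ))
      (Measure.pi fun _ => μ) :=
  (measurePreserving_piFinSuccAbove (fun _ => μ) (Fin.last d)).symm _

noncomputable def integrateLast (μ : Measure X) (f : (Fin (d + 1) → X) → E) :
    (Fin d → X) → E :=
  fun x => ∫ t, f (Fin.snoc x t) ∂μ

variable {μ : Measure X}

lemma integral_integral_snoc [SigmaFinite μ]
    {f : (Fin (d + 1) → X) → E} (hf : Integrable f (Measure.pi fun _ => μ)) :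
    ∫ x, ∫ t, f (Fin.snoc x t) ∂μ ∂(Measure.pi fun _ => μ)
      = ∫ y, f y ∂(Measure.pi fun _ => μ) := by
  have hmp := measurePreserving_snocMeasurableEquiv (d := d) μ
  rw [← hmp.integral_comp', integral_prod_symm (fun p => f (snocMeasurableEquiv X d p))
    ((hmp.integrable_comp_emb (snocMeasurableEquiv X d).measurableEmbedding).2 hf)]
  simp only [snocMeasurableEquiv_apply]

lemma MeasureTheory.StronglyMeasurable.integrateLast [SFinite μ] {f : (Fin (d + 1) → X) → E}
    (hf : StronglyMeasurable f) : StronglyMeasurable (integrateLast μ f) := by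
  have := (hf.comp_measurable (snocMeasurableEquiv X d).measurable).integral_prod_left' (μ := μ)
  simp only [Function.comp_def, snocMeasurableEquiv_apply] at this
  exact this

lemma norm_integrateLast_le [IsProbabilityMeasure μ] {f : (Fin (d + 1) → X) → E} {K : ℝ}
    (hf : ∀ y, ‖f y‖ ≤ K) (x : Fin d → X) : ‖integrateLast μ f x‖ ≤ K := by
  simpa [integrateLast] using
    norm_integral_le_of_norm_le_const (μ := μ) (.of_forall fun t => hf (Fin.snoc x t))

lemma integral_integrateLast_mul {𝕜 : Type*} [RCLike 𝕜] [SigmaFinite μ]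
    {g : (Fin (d + 1) → X) → 𝕜} {h : (Fin d → X) → 𝕜}
    (hgh : Integrable (fun y => g y * h (Fin.init y)) (Measure.pi fun _ => μ)) :
    ∫ x, integrateLast μ g x * h x ∂(Measure.pi fun _ => μ)
      = ∫ y, g y * h (Fin.init y) ∂(Measure.pi fun _ => μ) := by
  rw [← integral_integral_snoc hgh]
  simp only [integrateLast, Fin.init_snoc, integral_mul_const]

end IntegrateLast

instance inst_s11 (d : ℕ) : IsProbabilityMeasure (torusMeasure d) := by
  unfold torusMeasure; infer_instance

lemma fourierCoef_congr_ae {d : ℕ} {φ ψ : (Fin d → AddCircle (1 : ℝ)) → ℂ}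
    (h : φ =ᵐ[torusMeasure d] ψ) (α : Fin d → ℤ) : fourierCoef φ α = fourierCoef ψ α :=
  integral_congr_ae (by filter_upwards [h] with x hx using by rw [hx])

lemma prod_fourier_snoc_zero {d : ℕ} (α : Fin d → ℤ) (y : Fin (d + 1) → AddCircle (1 : ℝ)) :
    ∏ j, fourier (-(Fin.snoc α 0 : Fin (d + 1) → ℤ) j) (y j)
      = ∏ j, fourier (-(α j)) (Fin.init y j) := by
  simp [Fin.prod_univ_castSucc, Fin.init]

lemma fourierCoef_integrateLast {d : ℕ} {g : (Fin (d + 1) → AddCircle (1 : ℝ)) → ℂ}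
    (hg : Integrable g (torusMeasure (d + 1))) (α : Fin d → ℤ) :
    fourierCoef (integrateLast AddCircle.haarAddCircle g) α = fourierCoef g (Fin.snoc α 0) := by
  have hmono : Integrable (fun y => g y * ∏ j, fourier (-(α j)) (Fin.init y j))
      (torusMeasure (d + 1)) := by
    refine hg.mul_bdd (c := 1) (Continuous.aestronglyMeasurable ?_) (.of_forall fun y => ?_)
    · fun_prop
    · simp [Circle.norm_coe]
  simp only [fourierCoef, prod_fourier_snoc_zero]
  exact integral_integrateLast_mul hmono

lemma exists_Linfty_fourierCoef_snoc_zero {d : ℕ} (φ : Lp ℂ ⊤ (torusMeasure (d + 1))) :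
    ∃ φ' : Lp ℂ ⊤ (torusMeasure d), ‖φ'‖ ≤ ‖φ‖ ∧
      ∀ α, fourierCoef φ' α = fourierCoef φ (Fin.snoc α 0) := by
  obtain ⟨g, hg, hg_le, hφg⟩ := Lp.exists_stronglyMeasurable_norm_le_ae_eq φ
  have hψ : MemLp (integrateLast AddCircle.haarAddCircle g) ⊤ (torusMeasure d) :=
    memLp_top_of_bound hg.integrateLast.aestronglyMeasurable ‖φ‖
      (.of_forall (norm_integrateLast_le hg_le))
  refine ⟨hψ.toLp _, ?_, fun α => ?_⟩
  · refine (Lp.norm_le_of_ae_bound (norm_nonneg φ)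
      (hψ.coeFn_toLp.mono fun x hx => hx ▸ norm_integrateLast_le hg_le x)).trans_eq ?_
    simp
  · have hg_int : Integrable g (torusMeasure (d + 1)) :=
      ((Lp.memLp φ).ae_eq hφg).integrable le_top
    rw [fourierCoef_congr_ae hψ.coeFn_toLp, fourierCoef_integrateLast hg_int,
      fourierCoef_congr_ae hφg]

theorem nehari_constant_mono_general (d : ℕ) (C : ℝ)
    (h : ∀ (ρ : (Fin (d + 1) → ℕ) →₀ ℂ) (M : ℝ), 0 ≤ M →
      (∀ a b : (Fin (d + 1) → ℕ) →₀ ℂ,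
        ‖hankelSum ρ a b‖ ≤ M * l2norm a * l2norm b) →
      ∃ φ : Lp ℂ ⊤ (torusMeasure (d + 1)),
        (∀ α : Fin (d + 1) → ℕ, fourierCoef (⇑φ) (fun j => (α j : ℤ)) = ρ α) ∧
        ‖φ‖ ≤ C * M) :
    ∀ (ρ' : (Fin d → ℕ) →₀ ℂ) (M' : ℝ), 0 ≤ M' →
      (∀ a b : (Fin d → ℕ) →₀ ℂ,
        ‖hankelSum ρ' a b‖ ≤ M' * l2norm a * l2norm b) →
      ∃ φ' : Lp ℂ ⊤ (torusMeasure d),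
        (∀ α : Fin d → ℕ, fourierCoef (⇑φ') (fun j => (α j : ℤ)) = ρ' α) ∧
        ‖φ'‖ ≤ C * M' := by
  intro ρ' M' hM' hρ'
  obtain ⟨φ, hφ_coef, hφ_norm⟩ :=
    h (ρ'.embDomain (snocZero ℕ d)) M' hM' (hankelSum_embDomain_snocZero_le hM' hρ')
  obtain ⟨φ', hφ'_norm, hφ'_coef⟩ := exists_Linfty_fourierCoef_snoc_zero φ
  refine ⟨φ', fun α => ?_, hφ'_norm.trans hφ_norm⟩
  have hcast : (Fin.snoc (fun j => (α j : ℤ)) 0 : Fin (d + 1) → ℤ)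
      = fun j => (snocZero ℕ d α j : ℤ) := by
    simpa [Function.comp_def] using (Fin.comp_snoc (Nat.cast : ℕ → ℤ) α 0).symm
  rw [hφ'_coef, hcast, hφ_coef, Finsupp.embDomain_apply_self]

/-- **Monotonicity of the Nehari constants: `C_d ≤ C_{d+1}`.** If `C ≥ 0` has the
Nehari property in dimension `d + 1` (every Hankel form with coefficients `ρ` and
norm bound `M` has a bounded symbol `φ ∈ L^∞(𝕋^{d+1})` with `φ̂ = ρ` on `ℕ^{d+1}`
and `‖φ‖_∞ ≤ C·M`), then `C` has the same property in dimension `d`. -/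
theorem nehari_constant_mono (d : ℕ) (hd : 0 < d) (C : ℝ) (hC : 0 ≤ C)
    (h : ∀ (ρ : (Fin (d + 1) → ℕ) →₀ ℂ) (M : ℝ), 0 ≤ M →
      (∀ a b : (Fin (d + 1) → ℕ) →₀ ℂ,
        ‖hankelSum ρ a b‖ ≤ M * l2norm a * l2norm b) →
      ∃ φ : Lp ℂ ⊤ (torusMeasure (d + 1)),
        (∀ α : Fin (d + 1) → ℕ, fourierCoef (⇑φ) (fun j => (α j : ℤ)) = ρ α) ∧
        ‖φ‖ ≤ C * M) :
    ∀ (ρ' : (Fin d → ℕ) →₀ ℂ) (M' : ℝ), 0 ≤ M' →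
      (∀ a b : (Fin d → ℕ) →₀ ℂ,
        ‖hankelSum ρ' a b‖ ≤ M' * l2norm a * l2norm b) →
      ∃ φ' : Lp ℂ ⊤ (torusMeasure d),
        (∀ α : Fin d → ℕ, fourierCoef (⇑φ') (fun j => (α j : ℤ)) = ρ' α) ∧
        ‖φ'‖ ≤ C * M' :=
  nehari_constant_mono_general d C h
end
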